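/- arXiv:2503.17751 — 5 statements merged into one kernel-verified Lean document; each statement's English description precedes it below -/
import Mathlib

section
/- Let A be a commutative ring in which 2 is invertible, equipped with a real degree function d. Then for all f, g ∈ A, d(f + g) ≤ max{d(f), d(g)}; moreover if d(f) ≠ d(g) then d(f + g) = max{d(f), d(g)}. -/
/-!
Multiplication by `2` preserves the degree, because `d 2 = d (1² + 1²) = d 1 + d 1 = d (1 * 1) = d 1`.
Hence `(u + v)² + (u - v)² = 2 (u² + v²)` and the square axiom give
`max (d (u + v)) (d (u - v)) = max (d u) (d v)`, which contains the ultrametric inequality.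
If `d f < d g`, then `d (f + g) < d g` is impossible, as `g = (f + g) + (-f)` and `d (-f) = d f`.
-/

theorem WithBot.int_add_self_inj {a b : WithBot ℤ} : a + a = b + b ↔ a = b := by
  refine ⟨fun h => ?_, fun h => h ▸ rfl⟩
  induction a <;> induction b
  · rfl
  · exact absurd h.symm (by simp [← WithBot.coe_add])
  · exact absurd h (by simp [← WithBot.coe_add])
  · rw [← WithBot.coe_add, ← WithBot.coe_add, WithBot.coe_inj] at h
    rw [WithBot.coe_inj]
    omega

section DegreeFunction

variable {A : Type} [CommRing A] {d : A → WithBot ℤ}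
  (hdmul : ∀ f g : A, d (f * g) = d f + d g)
  (hdsq : ∀ f g : A, d (f ^ 2 + g ^ 2) = max (d f) (d g) + max (d f) (d g))
include hdmul

theorem degree_neg (f : A) : d (-f) = d f := by
  rw [← WithBot.int_add_self_inj, ← hdmul, ← hdmul, neg_mul_neg]

include hdsq

theorem degree_two_mul (f : A) : d (2 * f) = d f := by
  have hd2 : d 2 = d 1 := by
    calc d 2 = d (1 ^ 2 + 1 ^ 2) := by norm_num
      _ = d (1 * 1) := by rw [hdsq, max_self, hdmul]
      _ = d 1 := by rw [mul_one]
  rw [hdmul, hd2, ← hdmul, one_mul]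

theorem max_degree_add_sub (u v : A) :
    max (d (u + v)) (d (u - v)) = max (d u) (d v) := by
  rw [← WithBot.int_add_self_inj, ← hdsq, ← hdsq, ← degree_two_mul hdmul hdsq (u ^ 2 + v ^ 2)]
  congr 1
  ring

theorem degree_add_le (f g : A) : d (f + g) ≤ max (d f) (d g) :=
  (le_max_left _ _).trans_eq (max_degree_add_sub hdmul hdsq f g)

theorem degree_add_eq_of_lt {f g : A} (hfg : d f < d g) : d (f + g) = d g := by
  refine le_antisymm ((degree_add_le hdmul hdsq f g).trans_eq (max_eq_right hfg.le)) ?_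
  by_contra! hlt
  have hg : d g ≤ max (d (f + g)) (d f) := by
    simpa [degree_neg hdmul] using degree_add_le hdmul hdsq (f + g) (-f)
  exact (hg.trans_lt (max_lt hlt hfg)).false

theorem degree_add_eq_max_of_ne {f g : A} (hfg : d f ≠ d g) :
    d (f + g) = max (d f) (d g) := by
  rcases hfg.lt_or_gt with hlt | hgt
  · rw [degree_add_eq_of_lt hdmul hdsq hlt, max_eq_right hlt.le]
  · rw [add_comm, degree_add_eq_of_lt hdmul hdsq hgt, max_eq_left hgt.le]

end DegreeFunction

theorem stmt3_general (A : Type) [CommRing A]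
    (d : A → WithBot ℤ)
    (hdmul : ∀ f g : A, d (f * g) = d f + d g)
    (hdsq : ∀ f g : A, d (f ^ 2 + g ^ 2) = max (d f) (d g) + max (d f) (d g)) :
    ∀ f g : A, d (f + g) ≤ max (d f) (d g) ∧
      (d f ≠ d g → d (f + g) = max (d f) (d g)) := fun f g =>
  ⟨degree_add_le hdmul hdsq f g, degree_add_eq_max_of_ne hdmul hdsq⟩

/-- For a real degree function `d` on a commutative ring in which `2` is invertible:
`d (f + g) ≤ max (d f) (d g)`, with equality when `d f ≠ d g`. -/
theorem stmt3 (A : Type) [CommRing A] (h2 : IsUnit (2 : A)) (C : Subring A)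
    (d : A → WithBot ℤ)
    (hd0 : ∀ f : A, d f = ⊥ ↔ f = 0)
    (hdC : ∀ c ∈ C, c ≠ 0 → d c = 0)
    (hdCne : ∃ c ∈ C, c ≠ 0)
    (hdmul : ∀ f g : A, d (f * g) = d f + d g)
    (hdsq : ∀ f g : A, d (f ^ 2 + g ^ 2) = max (d f) (d g) + max (d f) (d g)) :
    ∀ f g : A, d (f + g) ≤ max (d f) (d g) ∧
      (d f ≠ d g → d (f + g) = max (d f) (d g)) :=
  stmt3_general A d hdmul hdsq
end

section
/- The total degree function on the polynomial ring ℝ[x₁, …, xₘ] is a real degree function with constants in ℝ: it sends 0 to −∞, nonzero constants to 0, is additive on products, and satisfies tdeg(f² + g²) = 2·max{tdeg(f), tdeg(g)} for all polynomials f, g. -/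
open MvPolynomial

private lemma degree_eq_sum {σ : Type*} (s : σ →₀ ℕ) :
    Finsupp.degree s = s.sum fun _ e => e := by
  simp [Finsupp.degree, Finsupp.sum]
  rfl

private lemma le_tdeg {σ : Type*} {p : MvPolynomial σ ℝ} {s : σ →₀ ℕ}
    (h : coeff s p ≠ 0) : Finsupp.degree s ≤ p.totalDegree := by
  rw [degree_eq_sum]
  exact le_totalDegree (by simpa [mem_support_iff] using h)

private lemma coeff_zero_of_lt {σ : Type*} {p : MvPolynomial σ ℝ} {s : σ →₀ ℕ}
    (h : p.totalDegree < Finsupp.degree s) : coeff s p = 0 := by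
  by_contra hc
  exact absurd (le_tdeg hc) (not_le.mpr h)

/-- The top homogeneous component of a nonzero polynomial is nonzero. -/
private lemma hcomp_ne_zero {σ : Type*} {p : MvPolynomial σ ℝ} (hp : p ≠ 0) :
    homogeneousComponent p.totalDegree p ≠ 0 := by
  obtain ⟨s, hs, hsum⟩ := Finset.exists_mem_eq_sup p.support
    (support_nonempty.mpr hp) (fun s => s.sum fun _ e => e)
  intro h
  have hc : coeff s (homogeneousComponent p.totalDegree p) = coeff s p := by
    rw [coeff_homogeneousComponent, if_pos]
    rw [degree_eq_sum, totalDegree, hsum]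
  rw [h, coeff_zero] at hc
  exact (mem_support_iff.mp hs) hc.symm

/-- The remainder after removing the degree-`n` homogeneous component has coefficients only
in degrees `< n`. -/
private lemma coeff_res {σ : Type*} {p : MvPolynomial σ ℝ} {n : ℕ} (hp : p.totalDegree ≤ n)
    {s : σ →₀ ℕ} (h : coeff s (p - homogeneousComponent n p) ≠ 0) : Finsupp.degree s < n := by
  rw [coeff_sub, coeff_homogeneousComponent] at h
  by_cases hds : Finsupp.degree s = n
  · rw [if_pos hds, sub_self] at h; exact absurd rfl h
  · rw [if_neg hds, sub_zero] at h
    exact lt_of_le_of_ne (le_trans (le_tdeg h) hp) hds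

private lemma res_deg {σ : Type*} {p : MvPolynomial σ ℝ} {n : ℕ} (hp : p.totalDegree ≤ n) :
    p - homogeneousComponent n p = 0 ∨ (p - homogeneousComponent n p).totalDegree < n := by
  by_cases h : p - homogeneousComponent n p = 0
  · exact Or.inl h
  · right
    obtain ⟨s, hs⟩ := support_nonempty.mpr h
    have hn : 0 < n := lt_of_le_of_lt (Nat.zero_le _) (coeff_res hp (mem_support_iff.mp hs))
    rw [totalDegree, Finset.sup_lt_iff (by simpa using hn)]
    intro b hb
    rw [← degree_eq_sum]
    exact coeff_res hp (mem_support_iff.mp hb)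

/-- Coefficients of `p * q` in top total degree only come from top homogeneous components. -/
private lemma coeff_mul_top {σ : Type*} {p q : MvPolynomial σ ℝ} {a b : ℕ}
    (hp : p.totalDegree ≤ a) (hq : q.totalDegree ≤ b) {s : σ →₀ ℕ}
    (hs : Finsupp.degree s = a + b) :
    coeff s (p * q) = coeff s (homogeneousComponent a p * homogeneousComponent b q) := by
  set P := homogeneousComponent a p with hP
  set Q := homogeneousComponent b q with hQ
  have hPd : P.totalDegree ≤ a := (homogeneousComponent_isHomogeneous a p).totalDegree_le
  have hQd : Q.totalDegree ≤ b := (homogeneousComponent_isHomogeneous b q).totalDegree_le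
  have key : ∀ u v : MvPolynomial σ ℝ, u.totalDegree ≤ a →
      (v = 0 ∨ v.totalDegree < b) → coeff s (u * v) = 0 := by
    intro u v hu hv
    rcases hv with rfl | hv
    · simp
    · apply coeff_zero_of_lt
      rw [hs]
      calc (u * v).totalDegree ≤ u.totalDegree + v.totalDegree := totalDegree_mul u v
        _ < a + b := by omega
  have key' : ∀ u v : MvPolynomial σ ℝ, (u = 0 ∨ u.totalDegree < a) →
      v.totalDegree ≤ b → coeff s (u * v) = 0 := by
    intro u v hu hv
    rcases hu with rfl | hu
    · simp
    · apply coeff_zero_of_lt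
      rw [hs]
      calc (u * v).totalDegree ≤ u.totalDegree + v.totalDegree := totalDegree_mul u v
        _ < a + b := by omega
  have hrd := res_deg hp
  have hsd := res_deg hq
  have expand : p * q = P * Q + (P * (q - Q) + ((p - P) * Q + (p - P) * (q - Q))) := by ring
  rw [expand, coeff_add, coeff_add, coeff_add]
  rw [key P (q - Q) hPd hsd, key' (p - P) Q hrd hQd,
    key (p - P) (q - Q) ?_ hsd]
  · ring
  · rcases hrd with h | h
    · rw [h, totalDegree_zero]; exact Nat.zero_le _
    · exact h.le

private lemma tdeg_mul {σ : Type*} {p q : MvPolynomial σ ℝ} (hp : p ≠ 0) (hq : q ≠ 0) :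
    (p * q).totalDegree = p.totalDegree + q.totalDegree := by
  refine le_antisymm (totalDegree_mul p q) ?_
  set P := homogeneousComponent p.totalDegree p
  set Q := homogeneousComponent q.totalDegree q
  have hPQ : P * Q ≠ 0 := mul_ne_zero (hcomp_ne_zero hp) (hcomp_ne_zero hq)
  obtain ⟨s, hs⟩ := support_nonempty.mpr hPQ
  have hhom : (P * Q).IsHomogeneous (p.totalDegree + q.totalDegree) :=
    (homogeneousComponent_isHomogeneous _ p).mul (homogeneousComponent_isHomogeneous _ q)
  have hdeg : Finsupp.degree s = p.totalDegree + q.totalDegree := by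
    by_contra hne
    exact (mem_support_iff.mp hs) (hhom.coeff_eq_zero hne)
  have : coeff s (p * q) ≠ 0 := by
    rw [coeff_mul_top le_rfl le_rfl hdeg]
    exact mem_support_iff.mp hs
  rw [← hdeg]
  exact le_tdeg this

private lemma sos_ne_zero {σ : Type*} {p q : MvPolynomial σ ℝ} (hp : p ≠ 0) :
    p ^ 2 + q ^ 2 ≠ 0 := by
  intro h
  apply hp
  apply MvPolynomial.funext
  intro x
  have h0 := congrArg (eval x) h
  simp only [map_add, map_pow, map_zero] at h0
  have : eval x p = 0 := by nlinarith [sq_nonneg (eval x p), sq_nonneg (eval x q)]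
  simpa using this

private lemma tdeg_sos {σ : Type*} {p q : MvPolynomial σ ℝ} (hp : p ≠ 0)
    (hle : q.totalDegree ≤ p.totalDegree) :
    (p ^ 2 + q ^ 2).totalDegree = p.totalDegree + p.totalDegree := by
  set a := p.totalDegree with ha
  refine le_antisymm ?_ ?_
  · refine le_trans (totalDegree_add _ _) (max_le ?_ ?_)
    · rw [sq]; exact le_trans (totalDegree_mul p p) le_rfl
    · rw [sq]; exact le_trans (totalDegree_mul q q) (by omega)
  · set P := homogeneousComponent a p
    set Q := homogeneousComponent a q
    have hH : P ^ 2 + Q ^ 2 ≠ 0 := sos_ne_zero (hcomp_ne_zero hp)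
    have hhom : (P ^ 2 + Q ^ 2).IsHomogeneous (a + a) := by
      refine IsHomogeneous.add ?_ ?_ <;> rw [sq]
      · exact (homogeneousComponent_isHomogeneous a p).mul (homogeneousComponent_isHomogeneous a p)
      · exact (homogeneousComponent_isHomogeneous a q).mul (homogeneousComponent_isHomogeneous a q)
    obtain ⟨s, hs⟩ := support_nonempty.mpr hH
    have hdeg : Finsupp.degree s = a + a := by
      by_contra hne
      exact (mem_support_iff.mp hs) (hhom.coeff_eq_zero hne)
    have : coeff s (p ^ 2 + q ^ 2) ≠ 0 := by
      rw [coeff_add, sq p, sq q, coeff_mul_top le_rfl le_rfl hdeg,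
        coeff_mul_top hle hle hdeg]
      have := mem_support_iff.mp hs
      rw [coeff_add, sq P, sq Q] at this
      exact this
    rw [← hdeg]
    exact le_tdeg this

/-- The total degree function on `ℝ[x₁, …, xₘ]` (with `deg 0 = -∞`) is a real degree
function with constants in `ℝ`. -/
theorem stmt4 (m : ℕ) (d : MvPolynomial (Fin m) ℝ → WithBot ℤ)
    (hd : ∀ f : MvPolynomial (Fin m) ℝ,
      d f = if f = 0 then ⊥ else ((f.totalDegree : ℤ) : WithBot ℤ)) :
    (∀ f : MvPolynomial (Fin m) ℝ, d f = ⊥ ↔ f = 0) ∧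
    (∀ c : ℝ, c ≠ 0 → d (MvPolynomial.C c) = 0) ∧
    (∀ f g : MvPolynomial (Fin m) ℝ, d (f * g) = d f + d g) ∧
    (∀ f g : MvPolynomial (Fin m) ℝ,
      d (f ^ 2 + g ^ 2) = max (d f) (d g) + max (d f) (d g)) := by
  refine ⟨?_, ?_, ?_, ?_⟩
  · intro f
    rw [hd]
    by_cases hf : f = 0
    · simp [hf]
    · simp [hf]
  · intro c hc
    rw [hd, if_neg (by simpa using hc), totalDegree_C]
    rfl
  · intro f g
    by_cases hf : f = 0
    · simp [hd, hf]
    by_cases hg : g = 0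
    · simp [hd, hg]
    rw [hd, hd, hd, if_neg hf, if_neg hg, if_neg (mul_ne_zero hf hg), tdeg_mul hf hg]
    push_cast
    rfl
  · intro f g
    by_cases hf : f = 0
    · by_cases hg : g = 0
      · simp [hd, hf, hg]
      · have h2 : g ^ 2 ≠ 0 := pow_ne_zero 2 hg
        rw [hd, hd, hd, if_pos hf, if_neg hg, if_neg (by simp [hf, h2]),
          hf]
        have : ((0:MvPolynomial (Fin m) ℝ) ^ 2 + g ^ 2) = g * g := by ring
        rw [this, tdeg_mul hg hg]
        rw [max_bot_left]
        exact_mod_cast rfl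
    · rcases le_total g.totalDegree f.totalDegree with hle | hle
      · rw [hd, hd, hd, if_neg hf, if_neg (sos_ne_zero hf), tdeg_sos hf hle]
        by_cases hg : g = 0
        · rw [hg, if_pos rfl, max_bot_right]
          exact_mod_cast rfl
        · rw [if_neg hg]
          have hmax : max ((f.totalDegree : ℤ) : WithBot ℤ) ((g.totalDegree : ℤ) : WithBot ℤ)
              = ((f.totalDegree : ℤ) : WithBot ℤ) := max_eq_left (by exact_mod_cast hle)
          rw [hmax]
          exact_mod_cast rfl
      · by_cases hg : g = 0
        · have h2 : f ^ 2 ≠ 0 := pow_ne_zero 2 hf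
          rw [hd, hd, hd, if_pos hg, if_neg hf, if_neg (by simp [hg, h2]), hg]
          have : (f ^ 2 + (0:MvPolynomial (Fin m) ℝ) ^ 2) = f * f := by ring
          rw [this, tdeg_mul hf hf]
          rw [max_bot_right]
          exact_mod_cast rfl
        · have hcomm : f ^ 2 + g ^ 2 = g ^ 2 + f ^ 2 := by ring
          rw [hd, hd, hd, if_neg hf, if_neg hg, hcomm, if_neg (sos_ne_zero hg),
            tdeg_sos hg hle]
          have hmax : max ((f.totalDegree : ℤ) : WithBot ℤ) ((g.totalDegree : ℤ) : WithBot ℤ)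
              = ((g.totalDegree : ℤ) : WithBot ℤ) := max_eq_right (by exact_mod_cast hle)
          rw [hmax]
          exact_mod_cast rfl
end

section
/- Let A be a formally real integral domain with a real degree function d with constants in a subring C. Then d extends to a real degree function on the field of fractions Frac(A) with constants in Frac(C), given by d(f/g) = d(f) − d(g). In particular this extension is well defined (independent of the representation of f/g). -/
/-- A real degree function `d` on a formally real integral domain `A` with constants in a
subring `C` extends to a real degree function `D` on `Frac(A)` with constants in `Frac(C)`,
determined (well-definedly) by `D (f / g) = d f - d g`, i.e. `D (f / g) + d g = d f`. -/
theorem stmt5 (A : Type) [CommRing A] [IsDomain A] (C : Subring A) (d : A → WithBot ℤ)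
    (hFR : ∀ x : A, IsSumSq x → IsSumSq (-x) → x = 0)
    (hd0 : ∀ f : A, d f = ⊥ ↔ f = 0)
    (hdC : ∀ c ∈ C, c ≠ 0 → d c = 0)
    (hdCne : ∃ c ∈ C, c ≠ 0)
    (hdmul : ∀ f g : A, d (f * g) = d f + d g)
    (hdsq : ∀ f g : A, d (f ^ 2 + g ^ 2) = max (d f) (d g) + max (d f) (d g)) :
    ∃ D : FractionRing A → WithBot ℤ,
      (∀ f g : A, g ≠ 0 →
        D (algebraMap A (FractionRing A) f / algebraMap A (FractionRing A) g) + d g = d f) ∧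
      (∀ x : FractionRing A, D x = ⊥ ↔ x = 0) ∧
      (∀ c c' : A, c ∈ C → c' ∈ C → c ≠ 0 → c' ≠ 0 →
        D (algebraMap A (FractionRing A) c / algebraMap A (FractionRing A) c') = 0) ∧
      (∀ x y : FractionRing A, D (x * y) = D x + D y) ∧
      (∀ x y : FractionRing A,
        D (x ^ 2 + y ^ 2) = max (D x) (D y) + max (D x) (D y)) := by
  classical
  set K := FractionRing A with hK
  set φ := algebraMap A K with hφdef
  have hφ : Function.Injective φ := IsFractionRing.injective A K
  have hφ0 : ∀ a : A, φ a = 0 ↔ a = 0 := by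
    intro a
    constructor
    · intro h; apply hφ; simpa using h
    · rintro rfl; simp
  -- integer-valued degree on nonzero elements
  set dz : A → ℤ := fun f => WithBot.unbotD 0 (d f) with hdz
  have hdzc : ∀ f : A, f ≠ 0 → d f = (dz f : WithBot ℤ) := by
    intro f hf
    have : d f ≠ ⊥ := fun h => hf ((hd0 f).1 h)
    obtain ⟨n, hn⟩ := WithBot.ne_bot_iff_exists.1 this
    simp [hdz, ← hn]
  have hdzmul : ∀ f g : A, f ≠ 0 → g ≠ 0 → dz (f * g) = dz f + dz g := by
    intro f g hf hg
    have h := hdmul f g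
    rw [hdzc f hf, hdzc g hg, hdzc (f * g) (mul_ne_zero hf hg)] at h
    exact_mod_cast h
  -- choose a representation for each element of K
  have hsurj : ∀ x : K, ∃ f : A, ∃ g : nonZeroDivisors A, x * φ g = φ f := by
    intro x
    obtain ⟨⟨f, g⟩, h⟩ := IsLocalization.surj (nonZeroDivisors A) x
    exact ⟨f, g, h⟩
  choose n dn hrep using hsurj
  have hdn0 : ∀ x : K, (dn x : A) ≠ 0 := fun x => nonZeroDivisors.coe_ne_zero _
  have hdnφ : ∀ x : K, φ (dn x : A) ≠ 0 := by
    intro x; rw [Ne, hφ0]; exact hdn0 x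
  have hn0 : ∀ x : K, x ≠ 0 → n x ≠ 0 := by
    intro x hx hnx
    apply hx
    have := hrep x
    rw [hnx, map_zero] at this
    rcases mul_eq_zero.1 this with h | h
    · exact h
    · exact absurd h (hdnφ x)
  set D : K → WithBot ℤ :=
    fun x => if x = 0 then ⊥ else ((dz (n x) - dz (dn x) : ℤ) : WithBot ℤ) with hD
  have hDbot : ∀ x : K, D x = ⊥ ↔ x = 0 := by
    intro x
    by_cases hx : x = 0 <;> simp [hD, hx]
  have hDval : ∀ x : K, x ≠ 0 → D x = ((dz (n x) - dz (dn x) : ℤ) : WithBot ℤ) := by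
    intro x hx
    show (if x = 0 then (⊥ : WithBot ℤ) else _) = _
    rw [if_neg hx]
  -- key well-definedness lemma
  have key : ∀ f g : A, f ≠ 0 → g ≠ 0 →
      D (φ f / φ g) = ((dz f - dz g : ℤ) : WithBot ℤ) := by
    intro f g hf hg
    set x := φ f / φ g with hx
    have hgφ : φ g ≠ 0 := by rw [Ne, hφ0]; exact hg
    have hxne : x ≠ 0 := div_ne_zero (by rw [Ne, hφ0]; exact hf) hgφ
    -- cross multiplication
    have hcross : f * (dn x : A) = n x * g := by
      apply hφ
      have h1 := hrep x
      rw [map_mul, map_mul]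
      rw [hx, div_mul_eq_mul_div, div_eq_iff hgφ] at h1
      linear_combination h1
    have hdeq : dz f + dz (dn x) = dz (n x) + dz g := by
      have := hdzmul f (dn x) hf (hdn0 x)
      rw [hcross, hdzmul (n x) g (hn0 x hxne) hg] at this
      linarith
    rw [hDval x hxne]
    congr 1
    omega
  refine ⟨D, ?_, hDbot, ?_, ?_, ?_⟩
  · -- D (f/g) + d g = d f
    intro f g hg
    by_cases hf : f = 0
    · subst hf
      simp only [map_zero, zero_div]
      rw [(hDbot 0).2 rfl, (hd0 (0 : A)).2 rfl]
      exact WithBot.bot_add _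
    · rw [key f g hf hg, hdzc g hg, hdzc f hf, ← WithBot.coe_add]
      congr 1
      omega
  · -- constants
    intro c c' hc hc' hc0 hc'0
    rw [key c c' hc0 hc'0]
    have h1 : d c = 0 := hdC c hc hc0
    have h2 : d c' = 0 := hdC c' hc' hc'0
    have e1 : dz c = 0 := by rw [hdzc c hc0] at h1; exact_mod_cast h1
    have e2 : dz c' = 0 := by rw [hdzc c' hc'0] at h2; exact_mod_cast h2
    rw [e1, e2]
    norm_num
  · -- multiplicativity
    intro x y
    by_cases hx : x = 0
    · subst hx; rw [zero_mul, (hDbot 0).2 rfl]; exact (WithBot.bot_add _).symm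
    by_cases hy : y = 0
    · subst hy; rw [mul_zero, (hDbot 0).2 rfl]; exact (WithBot.add_bot _).symm
    have hxy : x * y = φ (n x * n y) / φ ((dn x : A) * (dn y : A)) := by
      rw [map_mul, map_mul, eq_div_iff (mul_ne_zero (hdnφ x) (hdnφ y)),
        ← hrep x, ← hrep y]
      ring
    rw [hxy, key _ _ (mul_ne_zero (hn0 x hx) (hn0 y hy))
        (mul_ne_zero (hdn0 x) (hdn0 y)),
      hdzmul _ _ (hn0 x hx) (hn0 y hy), hdzmul _ _ (hdn0 x) (hdn0 y),
      hDval x hx, hDval y hy, ← WithBot.coe_add]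
    congr 1
    omega
  · -- sums of squares
    have sqcase : ∀ z : K, z ≠ 0 → D (z ^ 2) = ((2 * (dz (n z) - dz (dn z)) : ℤ)
        : WithBot ℤ) := by
      intro z hz
      have hz2 : z ^ 2 = φ (n z ^ 2) / φ ((dn z : A) ^ 2) := by
        rw [map_pow, map_pow, eq_div_iff (pow_ne_zero 2 (hdnφ z)), ← hrep z]
        ring
      rw [hz2, key _ _ (pow_ne_zero 2 (hn0 z hz)) (pow_ne_zero 2 (hdn0 z))]
      have e1 : dz (n z ^ 2) = 2 * dz (n z) := by
        have := hdzmul (n z) (n z) (hn0 z hz) (hn0 z hz)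
        rw [← sq] at this; omega
      have e2 : dz ((dn z : A) ^ 2) = 2 * dz (dn z) := by
        have := hdzmul (dn z : A) (dn z : A) (hdn0 z) (hdn0 z)
        rw [← sq] at this; omega
      rw [e1, e2]
      congr 1
      omega
    intro x y
    by_cases hx : x = 0
    · subst hx
      rw [(hDbot 0).2 rfl]
      by_cases hy : y = 0
      · subst hy
        norm_num
        rw [(hDbot 0).2 rfl]
        rfl
      · have h0 : (0 : K) ^ 2 + y ^ 2 = y ^ 2 := by ring
        rw [h0, sqcase y hy, hDval y hy, max_eq_right (OrderBot.bot_le _),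
          ← WithBot.coe_add]
        congr 1
        ring
    by_cases hy : y = 0
    · subst hy
      rw [(hDbot 0).2 rfl]
      have h0 : x ^ 2 + (0 : K) ^ 2 = x ^ 2 := by ring
      rw [h0, sqcase x hx, hDval x hx, max_eq_left (OrderBot.bot_le _),
        ← WithBot.coe_add]
      congr 1
      ring
    · -- both nonzero
      set a : A := n x * (dn y : A) with ha
      set b : A := n y * (dn x : A) with hb
      have hane : a ≠ 0 := mul_ne_zero (hn0 x hx) (hdn0 y)
      have hbne : b ≠ 0 := mul_ne_zero (hn0 y hy) (hdn0 x)
      have hnum : a ^ 2 + b ^ 2 ≠ 0 := by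
        intro h
        apply hane
        have hsq : IsSumSq (a ^ 2) := by
          have := IsSumSq.sq_add a IsSumSq.zero
          simpa [sq] using this
        have hsq' : IsSumSq (-(a ^ 2)) := by
          have hb2 : -(a ^ 2) = b ^ 2 := by linear_combination -h
          have := IsSumSq.sq_add b IsSumSq.zero
          rw [hb2]
          simpa [sq] using this
        exact (pow_eq_zero_iff (by norm_num : (2:ℕ) ≠ 0)).1 (hFR _ hsq hsq')
      have hxy2 : x ^ 2 + y ^ 2 =
          φ (a ^ 2 + b ^ 2) / φ (((dn x : A) * (dn y : A)) ^ 2) := by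
        have hden : φ (((dn x : A) * (dn y : A)) ^ 2) ≠ 0 := by
          rw [Ne, hφ0]
          exact pow_ne_zero 2 (mul_ne_zero (hdn0 x) (hdn0 y))
        rw [eq_div_iff hden]
        have h1 := hrep x
        have h2 := hrep y
        push_cast [map_add, map_mul, map_pow, ha, hb]
        linear_combination (φ (dn y : A)) ^ 2 * (x * φ (dn x : A) + φ (n x)) * h1 +
          (φ (dn x : A)) ^ 2 * (y * φ (dn y : A) + φ (n y)) * h2
      rw [hxy2, key _ _ hnum (pow_ne_zero 2 (mul_ne_zero (hdn0 x) (hdn0 y)))]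
      have hdnum : d (a ^ 2 + b ^ 2) = ((max (dz a) (dz b) + max (dz a) (dz b) : ℤ)
          : WithBot ℤ) := by
        rw [hdsq a b, hdzc a hane, hdzc b hbne]
        rw [← WithBot.coe_max, ← WithBot.coe_add]
      have e0 : dz (a ^ 2 + b ^ 2) = max (dz a) (dz b) + max (dz a) (dz b) := by
        rw [hdzc _ hnum] at hdnum
        exact_mod_cast hdnum
      have e1 : dz (((dn x : A) * (dn y : A)) ^ 2)
          = 2 * (dz (dn x) + dz (dn y)) := by
        have h1 := hdzmul ((dn x : A) * (dn y : A)) ((dn x : A) * (dn y : A))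
          (mul_ne_zero (hdn0 x) (hdn0 y)) (mul_ne_zero (hdn0 x) (hdn0 y))
        rw [← sq] at h1
        have h2 := hdzmul (dn x : A) (dn y : A) (hdn0 x) (hdn0 y)
        omega
      have ea : dz a = dz (n x) + dz (dn y) := hdzmul _ _ (hn0 x hx) (hdn0 y)
      have eb : dz b = dz (n y) + dz (dn x) := hdzmul _ _ (hn0 y hy) (hdn0 x)
      rw [hDval x hx, hDval y hy, ← WithBot.coe_max, ← WithBot.coe_add]
      congr 1
      omega
end

section
/- Let k be a field with char(k) ≠ 2 and let A be a finitely generated k-algebra. Then there exist finitely many elements x₁, …, xₙ ∈ A with Σᵢ xᵢ² = 0 such that the Zariski closure of the set of formally real primes of Spec(A) equals the reduced closed subscheme defined by (x₁, …, xₙ); i.e., a prime p of A is in that closure if and only if x₁, …, xₙ ∈ p_red, where the vanishing locus V(x₁,…,xₙ) with its reduced structure equals the closure of the formally real points. -/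
set_option maxHeartbeats 1000000
set_option synthInstance.maxHeartbeats 400000

section Helpers

variable {R : Type*} {S : Type*} [CommRing R] [CommRing S]

theorem isSumSq_map (f : R →+* S) {a : R} (h : IsSumSq a) : IsSumSq (f a) := by
  induction h with
  | zero => simpa using IsSumSq.zero
  | @sq_add a s _ ih =>
      rw [map_add, map_mul]
      exact IsSumSq.sq_add _ ih

theorem isSumSq_mul_self {s : R} (h : IsSumSq s) (c : R) : IsSumSq (s * (c * c)) := by
  induction h with
  | zero => simpa using IsSumSq.zero
  | @sq_add a t _ ih =>
      have e : (a * a + t) * (c * c) = (a * c) * (a * c) + t * (c * c) := by ring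
      rw [e]
      exact IsSumSq.sq_add _ ih

theorem isSumSq_mul {s t : R} (hs : IsSumSq s) (ht : IsSumSq t) : IsSumSq (s * t) := by
  induction hs with
  | zero => simpa using IsSumSq.zero
  | @sq_add a u _ ih =>
      have e : (a * a + u) * t = t * (a * a) + u * t := by ring
      rw [e]
      exact (isSumSq_mul_self ht a).add ih

theorem isSumSq_listsum (l : List R) : IsSumSq ((l.map fun y => y * y).sum) := by
  induction l with
  | nil => simpa using IsSumSq.zero
  | cons a t ih => simpa using IsSumSq.sq_add a ih

theorem isSumSq_exists_list {s : R} (h : IsSumSq s) :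
    ∃ l : List R, (l.map fun y => y * y).sum = s := by
  induction h with
  | zero => exact ⟨[], by simp⟩
  | @sq_add a u _ ih =>
      obtain ⟨l, hl⟩ := ih
      exact ⟨a :: l, by simp [hl]⟩

/-- each member of a list whose squares sum to zero has minus-its-square a sum of squares -/
theorem isSumSq_neg_sq_of_list {l : List R} (h : (l.map fun y => y * y).sum = 0) :
    ∀ y ∈ l, IsSumSq (-(y * y)) := by
  intro y hy
  obtain ⟨s, t, rfl⟩ := List.append_of_mem hy
  have e : -(y * y) = (s.map fun y => y * y).sum + (t.map fun y => y * y).sum := by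
    have h' := h
    simp only [List.map_append, List.sum_append, List.map_cons, List.sum_cons] at h'
    linear_combination -h'
  rw [e]
  exact (isSumSq_listsum s).add (isSumSq_listsum t)

end Helpers

section RealPrime

variable (B : Type*) [CommRing B]

/-- In a semireal commutative ring with `2` invertible there is a prime with formally real
residue field. -/
theorem exists_real_prime (h2 : Invertible (2 : B)) (hsr : ¬ IsSumSq (-1 : B)) :
    ∃ P : Ideal B, P.IsPrime ∧
      ∀ z : FractionRing (B ⧸ P), IsSumSq z → IsSumSq (-z) → z = 0 := by
  classical
  set C : Set (Set B) :=
    {P | (∀ ⦃x⦄, x ∈ P → ∀ ⦃y⦄, y ∈ P → x + y ∈ P) ∧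
         (∀ ⦃x⦄, x ∈ P → ∀ ⦃y⦄, y ∈ P → x * y ∈ P) ∧
         (∀ x : B, x * x ∈ P) ∧ (-1 : B) ∉ P} with hC
  have hP0 : {x : B | IsSumSq x} ∈ C := by
    refine ⟨fun x hx y hy => hx.add hy, fun x hx y hy => isSumSq_mul hx hy, fun x => ?_, hsr⟩
    simpa using IsSumSq.sq_add x IsSumSq.zero
  have hchainub : ∀ c ⊆ C, IsChain (· ⊆ ·) c → c.Nonempty → ∃ ub ∈ C, ∀ s ∈ c, s ⊆ ub := by
    intro c hcC hchain hcne
    obtain ⟨w, hw⟩ := hcne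
    refine ⟨⋃₀ c, ⟨?_, ?_, ?_, ?_⟩, fun s hs => Set.subset_sUnion_of_mem hs⟩
    · rintro x ⟨s, hs, hxs⟩ y ⟨t, ht, hyt⟩
      rcases hchain.total hs ht with hle | hle
      · exact ⟨t, ht, (hcC ht).1 (hle hxs) hyt⟩
      · exact ⟨s, hs, (hcC hs).1 hxs (hle hyt)⟩
    · rintro x ⟨s, hs, hxs⟩ y ⟨t, ht, hyt⟩
      rcases hchain.total hs ht with hle | hle
      · exact ⟨t, ht, (hcC ht).2.1 (hle hxs) hyt⟩
      · exact ⟨s, hs, (hcC hs).2.1 hxs (hle hyt)⟩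
    · exact fun x => ⟨w, hw, (hcC hw).2.2.1 x⟩
    · rintro ⟨s, hs, hns⟩
      exact (hcC hs).2.2.2 hns
  obtain ⟨M, hM0, hMmax⟩ := zorn_subset_nonempty C hchainub _ hP0
  obtain ⟨hMadd, hMmul, hMsq, hMneg⟩ := hMmax.prop
  have hzero : (0 : B) ∈ M := by simpa using hMsq 0
  have hone : (1 : B) ∈ M := by simpa using hMsq 1
  -- maximality: adjoining an element outside M produces -1
  have step : ∀ a : B, a ∉ M → ∃ s ∈ M, ∃ t ∈ M, s + a * t = -1 := by
    intro a ha
    by_contra hcon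
    push_neg at hcon
    have hpre : {x | ∃ s ∈ M, ∃ t ∈ M, x = s + a * t} ∈ C := by
      refine ⟨?_, ?_, ?_, ?_⟩
      · rintro x ⟨s, hs, t, ht, rfl⟩ y ⟨s', hs', t', ht', rfl⟩
        exact ⟨s + s', hMadd hs hs', t + t', hMadd ht ht', by ring⟩
      · rintro x ⟨s, hs, t, ht, rfl⟩ y ⟨s', hs', t', ht', rfl⟩
        refine ⟨s * s' + (a * a) * (t * t'),
          hMadd (hMmul hs hs') (hMmul (hMsq a) (hMmul ht ht')),
          s * t' + s' * t, hMadd (hMmul hs ht') (hMmul hs' ht), by ring⟩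
      · intro x
        exact ⟨x * x, hMsq x, 0, hzero, by ring⟩
      · rintro ⟨s, hs, t, ht, he⟩
        exact hcon s hs t ht he.symm
    have hsub : M ⊆ {x | ∃ s ∈ M, ∃ t ∈ M, x = s + a * t} :=
      fun x hx => ⟨x, hx, 0, hzero, by ring⟩
    have : {x | ∃ s ∈ M, ∃ t ∈ M, x = s + a * t} ⊆ M := hMmax.2 hpre hsub
    exact ha (this ⟨0, hzero, 1, hone, by ring⟩)
  have total : ∀ a : B, a ∈ M ∨ -a ∈ M := by
    intro a
    by_contra hcon
    push_neg at hcon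
    obtain ⟨s, hs, t, ht, h1⟩ := step a hcon.1
    obtain ⟨s', hs', t', ht', h2⟩ := step (-a) hcon.2
    have key : a * a * (t * t') + (s + (s' + s * s')) = -1 := by
      linear_combination (a * t') * h1 + (s + 1) * h2
    exact hMneg (key ▸ hMadd (hMmul (hMsq a) (hMmul ht ht'))
      (hMadd hs (hMadd hs' (hMmul hs hs'))))
  -- the support of M
  have hkeymul : ∀ c y : B, y ∈ M → -y ∈ M → c * y ∈ M := by
    intro c y hy hny
    have h2' : (2 : B) * ⅟(2 : B) = 1 := mul_invOf_self 2
    have e : c * y = (((c + 1) * ⅟(2 : B)) * ((c + 1) * ⅟(2 : B))) * y +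
        (((c - 1) * ⅟(2 : B)) * ((c - 1) * ⅟(2 : B))) * (-y) := by
      linear_combination (-(c * y) * (1 + 2 * ⅟(2 : B))) * h2'
    rw [e]
    exact hMadd (hMmul (hMsq _) hy) (hMmul (hMsq _) hny)
  set I : Ideal B :=
    { carrier := {x | x ∈ M ∧ -x ∈ M}
      add_mem' := by
        rintro x y ⟨hx1, hx2⟩ ⟨hy1, hy2⟩
        exact ⟨hMadd hx1 hy1, by rw [neg_add]; exact hMadd hx2 hy2⟩
      zero_mem' := ⟨hzero, by simpa using hzero⟩
      smul_mem' := by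
        rintro c x ⟨hx1, hx2⟩
        refine ⟨hkeymul c x hx1 hx2, ?_⟩
        have := hkeymul c (-x) hx2 (by simpa using hx1)
        simpa [mul_neg] using this } with hIdef
  have hImem : ∀ x : B, x ∈ I ↔ x ∈ M ∧ -x ∈ M := fun x => Iff.rfl
  have hIne : I ≠ ⊤ := by
    intro h
    have h1 : (1 : B) ∈ I := h ▸ Submodule.mem_top
    exact hMneg (by simpa using ((hImem 1).mp h1).2)
  have key2 : ∀ x y : B, x ∉ M → y ∉ M → x * y ∉ I := by
    intro x y hx hy hxy
    obtain ⟨s, hs, t, ht, h1⟩ := step x hx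
    have hny : -y ∈ M := (total y).resolve_left hy
    have hmem : -(x * y) * t ∈ M := ((hImem _).mp (I.mul_mem_right t (I.neg_mem hxy))).1
    apply hy
    have e : y = (-y) * s + (-(x * y)) * t := by linear_combination y * h1
    rw [e]
    exact hMadd (hMmul hny hs) hmem
  have hprime : I.IsPrime := by
    refine ⟨hIne, ?_⟩
    intro a b hab
    by_contra hcon
    push_neg at hcon
    obtain ⟨ha, hb⟩ := hcon
    obtain ⟨a', ha'M, ha'b⟩ : ∃ a', a' ∉ M ∧ a' * b ∈ I := by
      by_cases hAM : a ∈ M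
      · exact ⟨-a, fun hm => ha ((hImem a).mpr ⟨hAM, hm⟩),
          by simpa [neg_mul] using I.neg_mem hab⟩
      · exact ⟨a, hAM, hab⟩
    obtain ⟨b', hb'M, hb'⟩ : ∃ b', b' ∉ M ∧ a' * b' ∈ I := by
      by_cases hBM : b ∈ M
      · exact ⟨-b, fun hm => hb ((hImem b).mpr ⟨hBM, hm⟩),
          by simpa [mul_neg] using I.neg_mem ha'b⟩
      · exact ⟨b, hBM, ha'b⟩
    exact key2 a' b' ha'M hb'M hb'
  refine ⟨I, hprime, ?_⟩
  haveI := hprime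
  set K := FractionRing (B ⧸ I) with hK
  set π : B →+* K := (algebraMap (B ⧸ I) K).comp (Ideal.Quotient.mk I) with hπ
  have hker : ∀ x : B, π x = 0 ↔ x ∈ I := by
    intro x
    constructor
    · intro h
      have h' : algebraMap (B ⧸ I) K (Ideal.Quotient.mk I x) = algebraMap (B ⧸ I) K 0 := by
        rw [map_zero]; exact h
      exact Ideal.Quotient.eq_zero_iff_mem.mp (IsFractionRing.injective (B ⧸ I) K h')
    · intro h
      have : Ideal.Quotient.mk I x = 0 := Ideal.Quotient.eq_zero_iff_mem.mpr h
      simp [hπ, RingHom.comp_apply, this]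
  have hsurjK : ∀ z : K, ∃ b c : B, c ∉ I ∧ z * π c = π b := by
    intro z
    obtain ⟨⟨a, s⟩, rfl⟩ := IsLocalization.mk'_surjective (nonZeroDivisors (B ⧸ I)) z
    obtain ⟨b, hb⟩ := Ideal.Quotient.mk_surjective (I := I) a
    obtain ⟨c, hc⟩ := Ideal.Quotient.mk_surjective (I := I) (s : B ⧸ I)
    refine ⟨b, c, ?_, ?_⟩
    · intro hcI
      have h0 : (s : B ⧸ I) = 0 := by rw [← hc]; exact Ideal.Quotient.eq_zero_iff_mem.mpr hcI
      exact nonZeroDivisors.ne_zero s.2 h0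
    · show _ * (algebraMap (B ⧸ I) K) (Ideal.Quotient.mk I c) = (algebraMap (B ⧸ I) K) (Ideal.Quotient.mk I b)
      rw [hc, hb]
      exact IsLocalization.mk'_spec K a s
  have hclear : ∀ z : K, IsSumSq z → ∃ m d : B, m ∈ M ∧ d ∉ I ∧ z * (π d * π d) = π m := by
    intro z hz
    induction hz with
    | zero =>
        refine ⟨0, 1, hzero, ?_, by simp⟩
        intro h1
        exact hMneg (by simpa using ((hImem 1).mp h1).2)
    | @sq_add x s _ ih =>
        obtain ⟨m, d, hm, hd, hmd⟩ := ih
        obtain ⟨b, c, hc, hbc⟩ := hsurjK x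
        refine ⟨(b * d) * (b * d) + m * (c * c), c * d,
          hMadd (hMsq _) (hMmul hm (hMsq c)), ?_, ?_⟩
        · intro h
          rcases hprime.mem_or_mem h with h | h
          exacts [hc h, hd h]
        · simp only [map_add, map_mul]
          linear_combination (x * π c + π b) * (π d * π d) * hbc + (π c * π c) * hmd
  intro z hz hnz
  obtain ⟨m, d, hm, hd, hmd⟩ := hclear z hz
  obtain ⟨m', e, hm', he, hme⟩ := hclear (-z) hnz
  have hsum : m * (e * e) + m' * (d * d) ∈ I := by
    rw [← hker]
    simp only [map_add, map_mul]
    linear_combination (-(π e * π e)) * hmd + (-(π d * π d)) * hme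
  have h1 : m * (e * e) ∈ I := by
    refine (hImem _).mpr ⟨hMmul hm (hMsq e), ?_⟩
    have e1 : -(m * (e * e)) = m' * (d * d) + (-(m * (e * e) + m' * (d * d))) := by ring
    rw [e1]
    exact hMadd (hMmul hm' (hMsq d)) ((hImem _).mp (I.neg_mem hsum)).1
  have hz0 : π (m * (e * e)) = 0 := (hker _).mpr h1
  have hzz : z * ((π d * π d) * (π e * π e)) = 0 := by
    calc z * ((π d * π d) * (π e * π e)) = (z * (π d * π d)) * (π e * π e) := by ring
      _ = π m * (π e * π e) := by rw [hmd]
      _ = π (m * (e * e)) := by simp only [map_mul]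
      _ = 0 := hz0
  have hd0 : π d ≠ 0 := fun h => hd ((hker d).mp h)
  have he0 : π e ≠ 0 := fun h => he ((hker e).mp h)
  have hne0 : (π d * π d) * (π e * π e) ≠ 0 :=
    mul_ne_zero (mul_ne_zero hd0 hd0) (mul_ne_zero he0 he0)
  exact (mul_eq_zero.mp hzz).resolve_right hne0

/-- Key proposition: if no even power of `f` is the negative of a sum of squares, there is a
formally real prime avoiding `f`. -/
theorem exists_real_prime_not_mem {A : Type*} [CommRing A] (h2 : Invertible (2 : A)) (f : A)
    (hf : ∀ m : ℕ, ¬ IsSumSq (-(f ^ m * f ^ m))) :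
    ∃ p : PrimeSpectrum A,
      (∀ z : FractionRing (A ⧸ p.asIdeal), IsSumSq z → IsSumSq (-z) → z = 0) ∧
        f ∉ p.asIdeal := by
  classical
  letI B := Localization.Away f
  let φ : A →+* B := algebraMap A B
  haveI h2B : Invertible (2 : B) := by
    have h := h2.map φ
    rwa [map_ofNat] at h
  have hB : ¬ IsSumSq (-1 : B) := by
    intro hB1
    have hcl : ∀ z : B, IsSumSq z →
        ∃ (σ : A) (n : ℕ), IsSumSq σ ∧ z * φ (f ^ n * f ^ n) = φ σ := by
      intro z hz
      induction hz with
      | zero => exact ⟨0, 0, IsSumSq.zero, by simp⟩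
      | @sq_add x s _ ih =>
          obtain ⟨σ, n, hσ, hσe⟩ := ih
          obtain ⟨⟨a, u⟩, hau⟩ := IsLocalization.surj (Submonoid.powers f) x
          obtain ⟨mm, hmm⟩ := u.2
          have hmm' : f ^ mm = (u : A) := hmm
          have hau' : x * φ (f ^ mm) = φ a := by rw [hmm']; exact hau
          have hσe' : s * (φ (f ^ n) * φ (f ^ n)) = φ σ := by
            rw [← map_mul]; exact hσe
          refine ⟨(a * f ^ n) * (a * f ^ n) + σ * (f ^ mm * f ^ mm), mm + n,
            IsSumSq.sq_add _ (isSumSq_mul_self hσ (f ^ mm)), ?_⟩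
          simp only [pow_add, map_mul, map_add]
          linear_combination (x * φ (f ^ mm) + φ a) * (φ (f ^ n) * φ (f ^ n)) * hau' +
            (φ (f ^ mm) * φ (f ^ mm)) * hσe'
    obtain ⟨σ, n, hσ, he⟩ := hcl (-1) hB1
    have he' : φ (σ + f ^ n * f ^ n) = 0 := by
      rw [map_add]
      linear_combination -he
    obtain ⟨u, hu⟩ := (IsLocalization.map_eq_zero_iff (Submonoid.powers f) B _).mp he'
    obtain ⟨mm, hmm⟩ := u.2
    have hmm' : f ^ mm = (u : A) := hmm
    have hu' : f ^ mm * (σ + f ^ n * f ^ n) = 0 := by rw [hmm']; exact hu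
    have key : -(f ^ (mm + n) * f ^ (mm + n)) = σ * (f ^ mm * f ^ mm) := by
      have e : f ^ (mm + n) = f ^ mm * f ^ n := pow_add f mm n
      rw [e]
      linear_combination (-(f ^ mm)) * hu'
    exact hf (mm + n) (key ▸ isSumSq_mul_self hσ (f ^ mm))
  obtain ⟨P, hP, hPreal⟩ := exists_real_prime B h2B hB
  haveI := hP
  refine ⟨PrimeSpectrum.comap φ ⟨P, hP⟩, ?_, ?_⟩
  · intro z hz hnz
    letI g : A ⧸ Ideal.comap φ P →+* B ⧸ P := Ideal.quotientMap P φ le_rfl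
    haveI : (Ideal.comap φ P).IsPrime := Ideal.IsPrime.comap φ
    letI h : A ⧸ Ideal.comap φ P →+* FractionRing (B ⧸ P) :=
      (algebraMap (B ⧸ P) (FractionRing (B ⧸ P))).comp g
    have hinj : Function.Injective h :=
      (IsFractionRing.injective (B ⧸ P) (FractionRing (B ⧸ P))).comp
        Ideal.quotientMap_injective
    letI ψ : FractionRing (A ⧸ Ideal.comap φ P) →+* FractionRing (B ⧸ P) :=
      IsFractionRing.lift hinj
    have h1 : IsSumSq (ψ z) := isSumSq_map ψ hz
    have h2' : IsSumSq (-(ψ z)) := by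
      have := isSumSq_map ψ hnz
      exact (map_neg ψ z) ▸ this
    have h3 : ψ z = 0 := hPreal _ h1 h2'
    exact ψ.injective (by rw [h3]; exact (map_zero ψ).symm)
  · intro hmem
    have hmem' : φ f ∈ P := hmem
    have hu : IsUnit (φ f) := IsLocalization.Away.algebraMap_isUnit f
    exact hP.ne_top (Ideal.eq_top_of_isUnit_mem P hmem' hu)

end RealPrime

/-- For a finitely generated algebra `A` over a field `k` with `char k ≠ 2`, there are
`x₁, …, xₙ ∈ A` with `Σ xᵢ² = 0` such that the Zariski closure of the set of formally
real primes of `Spec A` equals the vanishing locus `V(x₁, …, xₙ)`. -/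
theorem stmt9 (k A : Type) [Field k] [CommRing A] [Algebra k A]
    (hchar : ringChar k ≠ 2) (hfg : Algebra.FiniteType k A) :
    ∃ (n : ℕ) (x : Fin n → A), ∑ i, x i ^ 2 = 0 ∧
      closure {p : PrimeSpectrum A |
          ∀ z : FractionRing (A ⧸ p.asIdeal), IsSumSq z → IsSumSq (-z) → z = 0} =
        PrimeSpectrum.zeroLocus (Set.range x) := by
  classical
  have h2k : (2 : k) ≠ 0 := Ring.two_ne_zero hchar
  have h2A : Invertible (2 : A) := by
    have hi : Invertible (2 : k) := invertibleOfNonzero h2k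
    have h := hi.map (algebraMap k A)
    rwa [map_ofNat] at h
  haveI := hfg
  haveI : IsNoetherianRing A := Algebra.FiniteType.isNoetherianRing k A
  set S : Set (PrimeSpectrum A) :=
    {p : PrimeSpectrum A |
      ∀ z : FractionRing (A ⧸ p.asIdeal), IsSumSq z → IsSumSq (-z) → z = 0} with hS
  set T : Set A := {a | IsSumSq (-(a * a))} with hT
  -- membership of a formally real prime kills every element of T
  have hfield : ∀ p : PrimeSpectrum A, p ∈ S → ∀ a : A, IsSumSq (-(a * a)) → a ∈ p.asIdeal := by
    intro p hp a ha
    haveI := p.2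
    set π : A →+* FractionRing (A ⧸ p.asIdeal) :=
      (algebraMap (A ⧸ p.asIdeal) (FractionRing (A ⧸ p.asIdeal))).comp
        (Ideal.Quotient.mk p.asIdeal) with hπ
    have h1 : IsSumSq (π a * π a) := by
      simpa using IsSumSq.sq_add (π a) IsSumSq.zero
    have h2 : IsSumSq (-(π a * π a)) := by
      have := isSumSq_map π ha
      rwa [map_neg, map_mul] at this
    have h3 : π a = 0 := mul_self_eq_zero.mp (hp _ h1 h2)
    have h4 : algebraMap (A ⧸ p.asIdeal) (FractionRing (A ⧸ p.asIdeal))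
        (Ideal.Quotient.mk p.asIdeal a) = algebraMap (A ⧸ p.asIdeal)
          (FractionRing (A ⧸ p.asIdeal)) 0 := by rw [map_zero]; exact h3
    exact Ideal.Quotient.eq_zero_iff_mem.mp
      (IsFractionRing.injective (A ⧸ p.asIdeal) (FractionRing (A ⧸ p.asIdeal)) h4)
  -- a finite subset of T spanning the same ideal
  obtain ⟨s0, hs0⟩ := (IsNoetherian.noetherian (Ideal.span T) : (Ideal.span T).FG)
  have hsub : ∀ x ∈ s0, ∃ t : Finset A, ↑t ⊆ T ∧ x ∈ Ideal.span (t : Set A) := by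
    intro x hx
    have hxT : x ∈ Ideal.span T := hs0 ▸ Ideal.subset_span hx
    exact Submodule.mem_span_finite_of_mem_span hxT
  choose F hF1 hF2 using hsub
  set t : Finset A := s0.attach.biUnion (fun x => F x.1 x.2) with ht
  have htT : (t : Set A) ⊆ T := by
    intro a hat
    simp only [ht, Finset.coe_biUnion, Set.mem_iUnion, Finset.mem_coe] at hat
    obtain ⟨x, _, hax⟩ := hat
    exact hF1 x.1 x.2 hax
  have hspanle : Ideal.span T ≤ Ideal.span (t : Set A) := by
    rw [← hs0, Submodule.span_le]
    intro x hx
    have hFt : (F x hx : Set A) ⊆ (t : Set A) := by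
      intro b hb
      simp only [ht, Finset.coe_biUnion, Set.mem_iUnion, Finset.mem_coe]
      exact ⟨⟨x, hx⟩, Finset.mem_attach _ _, hb⟩
    exact Ideal.span_mono hFt (hF2 x hx)
  -- concatenate lists whose squares sum to zero
  have hconc : ∀ u : Finset A, ↑u ⊆ T →
      ∃ L : List A, (∀ a ∈ u, a ∈ L) ∧ (L.map fun y => y * y).sum = 0 := by
    intro u
    induction u using Finset.induction_on with
    | empty => exact fun _ => ⟨[], by simp, by simp⟩
    | @insert a u _ ih =>
        intro hsubT
        have haT : IsSumSq (-(a * a)) := hsubT (by simp)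
        obtain ⟨l, hl⟩ := isSumSq_exists_list haT
        obtain ⟨L, hL1, hL2⟩ := ih (fun y hy => hsubT (by simp [hy]))
        refine ⟨(a :: l) ++ L, ?_, ?_⟩
        · intro b hb
          rcases Finset.mem_insert.mp hb with rfl | hb
          · simp
          · simp [hL1 b hb]
        · simp only [List.map_append, List.sum_append, List.map_cons, List.sum_cons, hl, hL2]
          ring
  obtain ⟨L, hmemL, hLsum⟩ := hconc t htT
  have hrange : Set.range (fun i : Fin L.length => L.get i) = {a | a ∈ L} := by
    ext a
    constructor
    · rintro ⟨i, rfl⟩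
      show L.get i ∈ L
      exact List.get_mem L i
    · intro ha
      obtain ⟨i, hi⟩ := List.mem_iff_get.mp ha
      exact ⟨i, hi⟩
  have hsum0 : ∑ i : Fin L.length, L.get i ^ 2 = 0 := by
    calc ∑ i : Fin L.length, L.get i ^ 2
        = (List.ofFn fun i : Fin L.length => L.get i ^ 2).sum := (Fin.sum_ofFn _).symm
      _ = (L.map fun y => y ^ 2).sum := by
          rw [← List.ofFn_getElem_eq_map L (fun y => y ^ 2)]
          exact congrArg List.sum (congrArg List.ofFn (funext fun i => by
            simp [List.get_eq_getElem]))
      _ = (L.map fun y => y * y).sum := by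
          rw [show (fun y : A => y ^ 2) = fun y : A => y * y from funext fun y => pow_two y]
      _ = 0 := hLsum
  refine ⟨L.length, (fun i => L.get i), hsum0, ?_⟩
  apply Set.Subset.antisymm
  · apply closure_minimal ?_ (PrimeSpectrum.isClosed_zeroLocus _)
    intro p hp
    rw [PrimeSpectrum.mem_zeroLocus]
    intro y hy
    rw [hrange] at hy
    exact hfield p hp y (isSumSq_neg_sq_of_list hLsum y hy)
  · intro q hq
    rw [← PrimeSpectrum.zeroLocus_vanishingIdeal_eq_closure, PrimeSpectrum.mem_zeroLocus]
    intro g hg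
    have hg' : ∀ p ∈ S, g ∈ p.asIdeal :=
      (PrimeSpectrum.mem_vanishingIdeal _ _).mp hg
    by_cases hcase : ∃ m : ℕ, IsSumSq (-(g ^ m * g ^ m))
    · obtain ⟨m, hm⟩ := hcase
      have hrangeq : Set.range (fun i : Fin L.length => L.get i) ⊆ ↑q.asIdeal :=
        (PrimeSpectrum.mem_zeroLocus _ _).mp hq
      have hTq : Ideal.span (t : Set A) ≤ q.asIdeal := by
        rw [Ideal.span_le]
        intro a hat
        apply hrangeq
        rw [hrange]
        exact hmemL a hat
      have hgm : g ^ m ∈ q.asIdeal := hTq (hspanle (Ideal.subset_span hm))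
      exact q.2.mem_of_pow_mem m hgm
    · push_neg at hcase
      obtain ⟨p, hpreal, hpf⟩ := exists_real_prime_not_mem h2A g hcase
      exact absurd (hg' p hpreal) hpf
end

section
/- Let A be a commutative ring in which 2 is a unit and let a₁, …, aₙ ∈ A. Then the Pythagoras number of A/(a₁² + ⋯ + aₙ²) is finite if and only if the Pythagoras number of A/(a₁², …, aₙ²) is finite. -/
/-- `B` has finite Pythagoras number: there is `n` such that every sum of squares in `B`
is a sum of `n` squares. -/
def HasFinitePythagorasNumber (B : Type) [CommRing B] : Prop :=
  ∃ n : ℕ, ∀ b : B, IsSumSq b → ∃ f : Fin n → B, b = ∑ i, f i ^ 2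

lemma liftSumSq {A : Type} [CommRing A] (K : Ideal A) (b : A ⧸ K) (hb : IsSumSq b) :
    ∃ b₀ : A, Ideal.Quotient.mk K b₀ = b ∧ IsSumSq b₀ := by
  induction hb with
  | zero => exact ⟨0, by simp, IsSumSq.zero⟩
  | sq_add x _ ih =>
    obtain ⟨s₀, hs₀, hS₀⟩ := ih
    obtain ⟨x₀, hx₀⟩ := Ideal.Quotient.mk_surjective x
    exact ⟨x₀ * x₀ + s₀, by simp [hx₀, hs₀], IsSumSq.sq_add _ hS₀⟩

lemma IsSumSq.myMap {R S : Type} [CommRing R] [CommRing S] (φ : R →+* S) {x : R}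
    (hx : IsSumSq x) : IsSumSq (φ x) := by
  induction hx with
  | zero => simpa using IsSumSq.zero
  | sq_add a _ ih => simpa [map_add, map_mul] using IsSumSq.sq_add (φ a) ih

lemma keyLemma {B : Type} {n : ℕ} [CommRing B] (h : B) (h2 : 2 * h = 1)
    (a : Fin n → B) (hS : ∑ i, a i ^ 2 = 0) (c : Fin n → B) :
    ∃ f : Fin (n * n) → B, ∑ i, c i * a i ^ 2 = ∑ i, f i ^ 2 := by
  set g : Fin n → Fin n → B :=
    fun i j => if j = i then h * (c i + 1) * a i else h * (c i - 1) * a j with hg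
  have hrow : ∀ i, ∑ j, g i j ^ 2 = c i * a i ^ 2 := by
    intro i
    have e1 : ∑ j, g i j ^ 2 =
        g i i ^ 2 + ∑ j ∈ Finset.univ.erase i, g i j ^ 2 :=
      (Finset.add_sum_erase _ _ (Finset.mem_univ i)).symm
    have e2 : ∑ j ∈ Finset.univ.erase i, g i j ^ 2 =
        (h * (c i - 1)) ^ 2 * ∑ j ∈ Finset.univ.erase i, a j ^ 2 := by
      rw [Finset.mul_sum]
      refine Finset.sum_congr rfl fun j hj => ?_
      have : j ≠ i := (Finset.mem_erase.mp hj).1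
      simp [hg, this]
      ring
    have e3 : ∑ j ∈ Finset.univ.erase i, a j ^ 2 = - a i ^ 2 := by
      have h4 := Finset.add_sum_erase Finset.univ (fun j => a j ^ 2) (Finset.mem_univ i)
      rw [hS] at h4
      linear_combination h4
    rw [e1, e2, e3]
    simp only [hg, if_pos rfl]
    linear_combination (a i ^ 2 * c i * (2 * h + 1)) * h2
  refine ⟨fun k => g ((finProdFinEquiv.symm k).1) ((finProdFinEquiv.symm k).2), ?_⟩
  calc ∑ i, c i * a i ^ 2 = ∑ p : Fin n × Fin n, g p.1 p.2 ^ 2 := by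
        rw [Fintype.sum_prod_type]
        exact (Finset.sum_congr rfl fun i _ => (hrow i)).symm
    _ = _ := (Fintype.sum_equiv finProdFinEquiv.symm _
        (fun p : Fin n × Fin n => g p.1 p.2 ^ 2) (fun _ => rfl)).symm

/-- For a commutative ring `A` in which `2` is a unit and `a₁, …, aₙ ∈ A`:
`P(A/(a₁² + ⋯ + aₙ²)) < ∞` iff `P(A/(a₁², …, aₙ²)) < ∞`. -/
theorem stmt10 (A : Type) [CommRing A] (h2 : IsUnit (2 : A)) (n : ℕ) (a : Fin n → A) :
    HasFinitePythagorasNumber (A ⧸ Ideal.span {∑ i, a i ^ 2}) ↔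
      HasFinitePythagorasNumber (A ⧸ Ideal.span (Set.range fun i => a i ^ 2)) := by
  set I : Ideal A := Ideal.span {∑ i, a i ^ 2} with hI
  set J : Ideal A := Ideal.span (Set.range fun i => a i ^ 2) with hJ
  have hsJ : (∑ i, a i ^ 2) ∈ J := by
    refine Ideal.sum_mem _ fun i _ => Ideal.subset_span ⟨i, rfl⟩
  obtain ⟨h, hh⟩ : ∃ h : A, 2 * h = 1 := by
    obtain ⟨u, hu⟩ := h2
    exact ⟨↑u⁻¹, by rw [← hu]; exact u.mul_inv⟩
  -- key : every element of J is a sum of n*n squares mod I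
  have key : ∀ t : A, t ∈ J → ∃ f : Fin (n * n) → A ⧸ I,
      Ideal.Quotient.mk I t = ∑ i, f i ^ 2 := by
    intro t ht
    rw [hJ, Ideal.mem_span_range_iff_exists_fun] at ht
    obtain ⟨c, hc⟩ := ht
    obtain ⟨f, hf⟩ := keyLemma (Ideal.Quotient.mk I h)
      (by rw [← map_ofNat (Ideal.Quotient.mk I) 2, ← map_mul, hh, map_one])
      (fun i => Ideal.Quotient.mk I (a i))
      (by
        have hz : Ideal.Quotient.mk I (∑ i, a i ^ 2) = 0 :=
          Ideal.Quotient.eq_zero_iff_mem.mpr (Ideal.subset_span rfl)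
        simpa [map_sum] using hz)
      (fun i => Ideal.Quotient.mk I (c i))
    refine ⟨f, ?_⟩
    rw [← hc, map_sum]
    rw [← hf]
    exact Finset.sum_congr rfl fun i _ => by rw [map_mul, map_pow]
  constructor
  · rintro ⟨N, hN⟩
    refine ⟨N, fun b hb => ?_⟩
    obtain ⟨b₀, hb₀, hb₀sq⟩ := liftSumSq J b hb
    obtain ⟨f, hf⟩ := hN (Ideal.Quotient.mk I b₀) (IsSumSq.myMap (Ideal.Quotient.mk I) hb₀sq)
    choose y hy using fun k => Ideal.Quotient.mk_surjective (f k)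
    have hmem : b₀ - ∑ k, y k ^ 2 ∈ I := by
      rw [← Ideal.Quotient.eq_zero_iff_mem, map_sub, map_sum]
      simp only [map_pow, hy]
      rw [hf, sub_self]
    have hmemJ : b₀ - ∑ k, y k ^ 2 ∈ J := by
      rw [hI, Ideal.mem_span_singleton] at hmem
      obtain ⟨r, hr⟩ := hmem
      rw [hr]; exact Ideal.mul_mem_right _ _ hsJ
    refine ⟨fun k => Ideal.Quotient.mk J (y k), ?_⟩
    rw [← hb₀]
    have : Ideal.Quotient.mk J (b₀ - ∑ k, y k ^ 2) = 0 :=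
      (Ideal.Quotient.eq_zero_iff_mem).mpr hmemJ
    rw [map_sub, sub_eq_zero] at this
    rw [this, map_sum]
    exact Finset.sum_congr rfl fun k _ => by rw [map_pow]
  · rintro ⟨N, hN⟩
    refine ⟨N + n * n, fun b hb => ?_⟩
    obtain ⟨b₀, hb₀, hb₀sq⟩ := liftSumSq I b hb
    obtain ⟨f, hf⟩ := hN (Ideal.Quotient.mk J b₀) (IsSumSq.myMap (Ideal.Quotient.mk J) hb₀sq)
    choose y hy using fun k => Ideal.Quotient.mk_surjective (f k)
    have hmemJ : b₀ - ∑ k, y k ^ 2 ∈ J := by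
      rw [← Ideal.Quotient.eq_zero_iff_mem, map_sub, map_sum]
      simp only [map_pow, hy]
      rw [hf, sub_self]
    obtain ⟨g, hg⟩ := key _ hmemJ
    refine ⟨Fin.append (fun k => Ideal.Quotient.mk I (y k)) g, ?_⟩
    rw [Fin.sum_univ_add]
    simp only [Fin.append_left, Fin.append_right]
    rw [← hg, ← hb₀, map_sub, map_sum]
    simp only [map_pow]
    ring
end
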